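/- arXiv:2412.05900 — 2 statements merged into one kernel-verified Lean document; each statement's English description precedes it below -/
import Mathlib

section
/- If 𝓘 = 𝓙 and 𝓘 is closed under thickening, then the sparse erosion distance is bounded above by the erosion distance: d̂_E((dgm_M, 𝓘), (dgm_N, 𝓘)) ≤ d_E(dgm_M^𝓘, dgm_N^𝓘). -/
/-- The closed `ε`-ball around `p` in `ℝ^d` w.r.t. the supremum distance,
described as an order interval. -/
def supBall {d : ℕ} (p : Fin d → ℝ) (ε : ℝ) : Set (Fin d → ℝ) :=
  {q | (fun i => p i - ε) ≤ q ∧ q ≤ fun i => p i + ε}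

/-- The `ε`-thickening `I^ε = ⋃_{p ∈ I} B_ε^□(p)` of a subset of `ℝ^d`. -/
def thick {d : ℕ} (I : Set (Fin d → ℝ)) (ε : ℝ) : Set (Fin d → ℝ) :=
  ⋃ p ∈ I, supBall p ε

/-- An interval of the poset `ℝ^d`: nonempty, order-convex, and connected via
chains of pairwise-comparable consecutive points. -/
def IsPosetInterval {d : ℕ} (I : Set (Fin d → ℝ)) : Prop :=
  I.Nonempty ∧
  (∀ p ∈ I, ∀ q ∈ I, ∀ r, p ≤ r → r ≤ q → r ∈ I) ∧
  (∀ p ∈ I, ∀ q ∈ I, ∃ (n : ℕ) (c : Fin (n + 1) → Fin d → ℝ),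
    c 0 = p ∧ c (Fin.last n) = q ∧ (∀ i, c i ∈ I) ∧
    ∀ i : Fin n, c i.castSucc ≤ c i.succ ∨ c i.succ ≤ c i.castSucc)

/-- A correspondence between families `A` and `B`: a left- and right-total
relation `R ⊆ A × B`. -/
def IsCorr {α : Type*} (A B : Set (Set α)) (R : Set (Set α × Set α)) : Prop :=
  R ⊆ A ×ˢ B ∧ (∀ I ∈ A, ∃ J ∈ B, (I, J) ∈ R) ∧ (∀ J ∈ B, ∃ I ∈ A, (I, J) ∈ R)

/-- An `ε`-correspondence between families of intervals of `ℝ^d`. -/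
def IsEpsCorr {d : ℕ} (A B : Set (Set (Fin d → ℝ))) (ε : ℝ)
    (R : Set (Set (Fin d → ℝ) × Set (Fin d → ℝ))) : Prop :=
  IsCorr A B R ∧ ∀ p ∈ R, p.2 ⊆ thick p.1 ε ∧ p.1 ⊆ thick p.2 ε

open scoped ENNReal

/-- `d̂(𝓘,𝓙) := inf {ε > 0 : ∃ an ε-correspondence between 𝓘 and 𝓙}`,
with `inf ∅ = ∞`. -/
noncomputable def dhat {d : ℕ} (A B : Set (Set (Fin d → ℝ))) : ℝ≥0∞ :=
  sInf (ENNReal.ofReal '' {ε : ℝ | 0 < ε ∧ ∃ R, IsEpsCorr A B ε R})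

/-- The sparse erosion distance between `(dgm_M, 𝓘)` and `(dgm_N, 𝓙)`, with the
generalized rank invariants abstracted as functions `rkM, rkN` on subsets of `ℝ^d`. -/
noncomputable def dEhat {d : ℕ} (rkM rkN : Set (Fin d → ℝ) → ℕ)
    (A B : Set (Set (Fin d → ℝ))) : ℝ≥0∞ :=
  sInf (ENNReal.ofReal '' {ε : ℝ | 0 < ε ∧ ∃ R, IsEpsCorr A B ε R ∧
    ∀ p ∈ R, ∀ δ : ℝ, 0 ≤ δ →
      rkN (thick p.2 (ε + δ)) ≤ rkM (thick p.1 δ) ∧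
      rkM (thick p.1 (ε + δ)) ≤ rkN (thick p.2 δ)})

/-- The erosion distance `d_E` between the GPDs of `M` and `N` over a family `𝓘`
closed under thickening, with the rank invariants abstracted as functions. -/
noncomputable def dE {d : ℕ} (rkM rkN : Set (Fin d → ℝ) → ℕ)
    (A : Set (Set (Fin d → ℝ))) : ℝ≥0∞ :=
  sInf (ENNReal.ofReal '' {ε : ℝ | 0 < ε ∧
    ∀ I ∈ A, rkN (thick I ε) ≤ rkM I ∧ rkM (thick I ε) ≤ rkN I})

/-! On the diagonal correspondence `I ↦ I`, the sparse erosion condition at `(I, I)` with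
shift `δ` is the erosion condition at the interval `I^δ ∈ 𝓘`, because `(I^δ)^ε ⊆ I^(ε+δ)` and
ranks are inclusion-reversing. -/

section

variable {d : ℕ}

lemma subset_thick {I : Set (Fin d → ℝ)} {ε : ℝ} (hε : 0 ≤ ε) : I ⊆ thick I ε :=
  fun _ hp => Set.mem_biUnion hp ⟨fun i => by simp [hε], fun i => by simp [hε]⟩

lemma thick_thick_subset (I : Set (Fin d → ℝ)) (ε δ : ℝ) :
    thick (thick I δ) ε ⊆ thick I (ε + δ) := by
  simp only [thick, Set.iUnion₂_subset_iff, Set.mem_iUnion]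
  rintro r ⟨p, hp, hpr₁, hpr₂⟩ q ⟨hrq₁, hrq₂⟩
  refine Set.mem_biUnion hp ⟨fun i => ?_, fun i => ?_⟩
  · have := hpr₁ i; have := hrq₁ i; simp only at *; linarith
  · have := hpr₂ i; have := hrq₂ i; simp only at *; linarith

lemma isEpsCorr_diagonal (A : Set (Set (Fin d → ℝ))) {ε : ℝ} (hε : 0 ≤ ε) :
    IsEpsCorr A A ε ((fun I => (I, I)) '' A) := by
  refine ⟨⟨?_, fun I hI => ⟨I, hI, I, hI, rfl⟩, fun I hI => ⟨I, hI, I, hI, rfl⟩⟩, ?_⟩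
  · rintro _ ⟨I, hI, rfl⟩
    exact ⟨hI, hI⟩
  · rintro _ ⟨I, -, rfl⟩
    exact ⟨subset_thick hε, subset_thick hε⟩

end

theorem dEhat_le_dE_general {d : ℕ} (rkM rkN : Set (Fin d → ℝ) → ℕ)
    (hM : ∀ I J : Set (Fin d → ℝ), I ⊆ J → rkM J ≤ rkM I)
    (hN : ∀ I J : Set (Fin d → ℝ), I ⊆ J → rkN J ≤ rkN I)
    (𝓘 : Set (Set (Fin d → ℝ)))
    (hclosed : ∀ I ∈ 𝓘, ∀ ε : ℝ, 0 ≤ ε → thick I ε ∈ 𝓘) :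
    dEhat rkM rkN 𝓘 𝓘 ≤ dE rkM rkN 𝓘 := by
  refine sInf_le_sInf <| Set.image_mono fun ε ⟨hε, herosion⟩ =>
    ⟨hε, _, isEpsCorr_diagonal 𝓘 hε.le, ?_⟩
  rintro _ ⟨I, hI, rfl⟩ δ hδ
  obtain ⟨hNM, hMN⟩ := herosion (thick I δ) (hclosed I hI δ hδ)
  have hsub := thick_thick_subset I ε δ
  exact ⟨(hN _ _ hsub).trans hNM, (hM _ _ hsub).trans hMN⟩

/-- If `𝓘 = 𝓙` is closed under thickening, the sparse erosion distance is
bounded above by the erosion distance. -/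
theorem dEhat_le_dE {d : ℕ} (rkM rkN : Set (Fin d → ℝ) → ℕ)
    (hM : ∀ I J : Set (Fin d → ℝ), I ⊆ J → rkM J ≤ rkM I)
    (hN : ∀ I J : Set (Fin d → ℝ), I ⊆ J → rkN J ≤ rkN I)
    (𝓘 : Set (Set (Fin d → ℝ)))
    (h𝓘 : ∀ I ∈ 𝓘, IsPosetInterval I) (hne𝓘 : 𝓘.Nonempty)
    (hclosed : ∀ I ∈ 𝓘, ∀ ε : ℝ, 0 ≤ ε → thick I ε ∈ 𝓘) :
    dEhat rkM rkN 𝓘 𝓘 ≤ dE rkM rkN 𝓘 :=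
  dEhat_le_dE_general rkM rkN hM hN 𝓘 hclosed
end

section
/- Lipschitz stability of the sparsified loss: let K be a finite family of (1,1)- or (2,1)-intervals of ℝ², and let J₁, J₂ be two n-element families of (1,1)- or (2,1)-intervals. Then |d̂(K, J₁) − d̂(K, J₂)| ≤ 2 · min_π ‖v_{π(J₁)} − v_{J₂}‖_∞, where the minimum ranges over all bijections π matching J₁ with J₂ and v denotes the concatenated ℝ^{6n} parametrization. -/
/-- The closed `ε`-ball in `ℝ²` around `p` w.r.t. the supremum distance, as an
order interval. -/
def supBall2 (p : ℝ × ℝ) (ε : ℝ) : Set (ℝ × ℝ) :=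
  {q | p.1 - ε ≤ q.1 ∧ p.2 - ε ≤ q.2 ∧ q.1 ≤ p.1 + ε ∧ q.2 ≤ p.2 + ε}

/-- The `ε`-thickening of a subset of `ℝ²`. -/
def thick2 (I : Set (ℝ × ℝ)) (ε : ℝ) : Set (ℝ × ℝ) :=
  ⋃ p ∈ I, supBall2 p ε

/-- An interval of the poset `ℝ²`: nonempty, order-convex, connected via chains
of pairwise-comparable consecutive points. -/
def IsInterval2 (I : Set (ℝ × ℝ)) : Prop :=
  I.Nonempty ∧
  (∀ p ∈ I, ∀ q ∈ I, ∀ r, p ≤ r → r ≤ q → r ∈ I) ∧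
  (∀ p ∈ I, ∀ q ∈ I, ∃ (n : ℕ) (c : Fin (n + 1) → ℝ × ℝ),
    c 0 = p ∧ c (Fin.last n) = q ∧ (∀ i, c i ∈ I) ∧
    ∀ i : Fin n, c i.castSucc ≤ c i.succ ∨ c i.succ ≤ c i.castSucc)

/-- A correspondence: a left- and right-total relation `R ⊆ A × B`. -/
def IsCorr2 (A B : Set (Set (ℝ × ℝ))) (R : Set (Set (ℝ × ℝ) × Set (ℝ × ℝ))) : Prop :=
  R ⊆ A ×ˢ B ∧ (∀ I ∈ A, ∃ J ∈ B, (I, J) ∈ R) ∧ (∀ J ∈ B, ∃ I ∈ A, (I, J) ∈ R)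

/-- An `ε`-correspondence between families of intervals of `ℝ²`. -/
def IsEpsCorr2 (A B : Set (Set (ℝ × ℝ))) (ε : ℝ)
    (R : Set (Set (ℝ × ℝ) × Set (ℝ × ℝ))) : Prop :=
  IsCorr2 A B R ∧ ∀ p ∈ R, p.2 ⊆ thick2 p.1 ε ∧ p.1 ⊆ thick2 p.2 ε

open scoped ENNReal

/-- `d̂(𝓘,𝓙) := inf {ε > 0 : ∃ an ε-correspondence between 𝓘 and 𝓙}`, with
`inf ∅ = ∞`. -/
noncomputable def dhat2 (A B : Set (Set (ℝ × ℝ))) : ℝ≥0∞ :=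
  sInf (ENNReal.ofReal '' {ε : ℝ | 0 < ε ∧ ∃ R, IsEpsCorr2 A B ε R})

/-- The `(2,1)`-interval of `ℝ²` with minimal points `(x-b, y)`, `(x, y-c)` and
maximal point `(x+d, y+a)`; a `(1,1)`-interval corresponds to `b = c = 0`. -/
def int21 (x y a b c d : ℝ) : Set (ℝ × ℝ) :=
  {p | (((x - b, y) : ℝ × ℝ) ≤ p ∨ ((x, y - c) : ℝ × ℝ) ≤ p) ∧ p ≤ (x + d, y + a)}

/-- The `(2,1)`-interval encoded by the parameter vector `v = (x,y,a,b,c,d) ∈ ℝ⁶`. -/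
def int21v (v : Fin 6 → ℝ) : Set (ℝ × ℝ) :=
  int21 (v 0) (v 1) (v 2) (v 3) (v 4) (v 5)

/-- Nonnegativity of the lengths `a, b, c, d` in the parameter vector. -/
def NonnegParams (v : Fin 6 → ℝ) : Prop :=
  0 ≤ v 2 ∧ 0 ≤ v 3 ∧ 0 ≤ v 4 ∧ 0 ≤ v 5

/-!
An optimal permutation `π` matches `J₁` with `J₂` so that corresponding parameter vectors are
`m`-close in the sup norm; then each matched pair of intervals lies in each other's
`2m`-thickening, so the matching is a `2m`-correspondence. Composing it with any
`ε`-correspondence between `K` and `J₁` (resp. `J₂`) gives an `(ε + 2m)`-correspondence with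
`J₂` (resp. `J₁`), hence `d̂(K, J₂) ≤ d̂(K, J₁) + 2m` and symmetrically.
-/

theorem mem_supBall2_trans {p q r : ℝ × ℝ} {ε δ : ℝ} (hq : q ∈ supBall2 p ε)
    (hr : r ∈ supBall2 q δ) : r ∈ supBall2 p (ε + δ) := by
  obtain ⟨hq₁, hq₂, hq₃, hq₄⟩ := hq
  obtain ⟨hr₁, hr₂, hr₃, hr₄⟩ := hr
  exact ⟨by linarith, by linarith, by linarith, by linarith⟩

theorem mem_thick2 {I : Set (ℝ × ℝ)} {ε : ℝ} {q : ℝ × ℝ} :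
    q ∈ thick2 I ε ↔ ∃ p ∈ I, q ∈ supBall2 p ε := by
  simp only [thick2, Set.mem_iUnion, exists_prop]

theorem subset_thick2_trans {S T U : Set (ℝ × ℝ)} {ε δ : ℝ} (hST : S ⊆ thick2 T δ)
    (hTU : T ⊆ thick2 U ε) : S ⊆ thick2 U (ε + δ) := by
  intro r hr
  obtain ⟨q, hq, hrq⟩ := mem_thick2.1 (hST hr)
  obtain ⟨p, hp, hqp⟩ := mem_thick2.1 (hTU hq)
  exact mem_thick2.2 ⟨p, hp, mem_supBall2_trans hqp hrq⟩

namespace IsEpsCorr2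

variable {A B C : Set (Set (ℝ × ℝ))} {ε δ : ℝ} {R S : Set (Set (ℝ × ℝ) × Set (ℝ × ℝ))}

theorem symm (h : IsEpsCorr2 A B ε R) : IsEpsCorr2 B A ε (Prod.swap ⁻¹' R) := by
  obtain ⟨⟨hR, hA, hB⟩, hthick⟩ := h
  exact ⟨⟨fun p hp => ⟨(hR hp).2, (hR hp).1⟩, hB, hA⟩,
    fun p hp => ⟨(hthick _ hp).2, (hthick _ hp).1⟩⟩

theorem comp (hR : IsEpsCorr2 A B ε R) (hS : IsEpsCorr2 B C δ S) :
    IsEpsCorr2 A C (ε + δ) {p | ∃ M, (p.1, M) ∈ R ∧ (M, p.2) ∈ S} := by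
  obtain ⟨⟨hRAB, hRA, hRB⟩, hRthick⟩ := hR
  obtain ⟨⟨hSBC, hSB, hSC⟩, hSthick⟩ := hS
  refine ⟨⟨?_, ?_, ?_⟩, ?_⟩
  · rintro ⟨I, J⟩ ⟨M, hIM, hMJ⟩
    exact ⟨(hRAB hIM).1, (hSBC hMJ).2⟩
  · intro I hI
    obtain ⟨M, hM, hIM⟩ := hRA I hI
    obtain ⟨J, hJ, hMJ⟩ := hSB M hM
    exact ⟨J, hJ, M, hIM, hMJ⟩
  · intro J hJ
    obtain ⟨M, hM, hMJ⟩ := hSC J hJ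
    obtain ⟨I, hI, hIM⟩ := hRB M hM
    exact ⟨I, hI, M, hIM, hMJ⟩
  · rintro ⟨I, J⟩ ⟨M, hIM, hMJ⟩
    refine ⟨subset_thick2_trans (hSthick _ hMJ).1 (hRthick _ hIM).1, ?_⟩
    rw [add_comm]
    exact subset_thick2_trans (hRthick _ hIM).2 (hSthick _ hMJ).2

end IsEpsCorr2

theorem dhat2_le_add_of_isEpsCorr2 {A B C : Set (Set (ℝ × ℝ))} {ε : ℝ}
    {S : Set (Set (ℝ × ℝ) × Set (ℝ × ℝ))} (hS : IsEpsCorr2 B C ε S) (hε : 0 ≤ ε) :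
    dhat2 A C ≤ dhat2 A B + ENNReal.ofReal ε := by
  rw [dhat2, dhat2, ENNReal.sInf_add]
  refine le_iInf₂ ?_
  rintro _ ⟨δ, ⟨hδ, R, hR⟩, rfl⟩
  calc dhat2 A C ≤ ENNReal.ofReal (δ + ε) :=
        sInf_le ⟨δ + ε, ⟨by linarith, _, hR.comp hS⟩, rfl⟩
    _ = ENNReal.ofReal δ + ENNReal.ofReal ε := ENNReal.ofReal_add hδ.le hε

theorem isEpsCorr2_range_of_perm {ι : Type*} {f g : ι → Set (ℝ × ℝ)} {ε : ℝ}
    (π : Equiv.Perm ι) (h : ∀ i, g i ⊆ thick2 (f (π i)) ε ∧ f (π i) ⊆ thick2 (g i) ε) :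
    IsEpsCorr2 (Set.range f) (Set.range g) ε (Set.range fun i => (f (π i), g i)) := by
  refine ⟨⟨?_, ?_, ?_⟩, ?_⟩
  · rintro _ ⟨i, rfl⟩
    exact ⟨⟨π i, rfl⟩, ⟨i, rfl⟩⟩
  · rintro _ ⟨j, rfl⟩
    exact ⟨g (π.symm j), ⟨π.symm j, rfl⟩, ⟨π.symm j, by simp⟩⟩
  · rintro _ ⟨i, rfl⟩
    exact ⟨f (π i), ⟨π i, rfl⟩, ⟨i, rfl⟩⟩
  · rintro _ ⟨i, rfl⟩
    exact h i

theorem exists_mem_Icc_near {lo hi t δ : ℝ} (hδ : 0 ≤ δ) (hle : lo ≤ hi)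
    (hlo : lo - δ ≤ t) (hhi : t ≤ hi + δ) : ∃ s, lo ≤ s ∧ s ≤ hi ∧ s - δ ≤ t ∧ t ≤ s + δ := by
  rcases le_total t lo with htlo | hlot
  · exact ⟨lo, le_rfl, hle, by linarith, by linarith⟩
  rcases le_total t hi with hthi | hhit
  · exact ⟨t, hlot, hthi, by linarith, by linarith⟩
  · exact ⟨hi, hle, le_rfl, by linarith, by linarith⟩

theorem exists_mem_Icc_mem_supBall2 {a₁ a₂ b₁ b₂ δ : ℝ} {q : ℝ × ℝ} (hδ : 0 ≤ δ)
    (h₁ : a₁ ≤ b₁) (h₂ : a₂ ≤ b₂) (hq₁ : a₁ - δ ≤ q.1) (hq₂ : a₂ - δ ≤ q.2)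
    (hq₁' : q.1 ≤ b₁ + δ) (hq₂' : q.2 ≤ b₂ + δ) :
    ∃ p ∈ Set.Icc (a₁, a₂) (b₁, b₂), q ∈ supBall2 p δ := by
  obtain ⟨s₁, hs₁a, hs₁b, hs₁q, hqs₁⟩ := exists_mem_Icc_near hδ h₁ hq₁ hq₁'
  obtain ⟨s₂, hs₂a, hs₂b, hs₂q, hqs₂⟩ := exists_mem_Icc_near hδ h₂ hq₂ hq₂'
  exact ⟨(s₁, s₂), ⟨⟨hs₁a, hs₂a⟩, ⟨hs₁b, hs₂b⟩⟩, hs₁q, hs₂q, hqs₁, hqs₂⟩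

-- The factor `2`: a corner coordinate such as `x - b` moves by up to `|Δx| + |Δb| ≤ 2ε`.
theorem int21v_subset_thick2 {v w : Fin 6 → ℝ} {ε : ℝ} (hv : NonnegParams v)
    (h : ‖v - w‖ ≤ ε) : int21v w ⊆ thick2 (int21v v) (2 * ε) := by
  have hcoord : ∀ j, |v j - w j| ≤ ε := fun j => (norm_le_pi_norm (v - w) j).trans h
  have hlow : ∀ j, v j - ε ≤ w j := fun j => by linarith [le_abs_self (v j - w j), hcoord j]
  have hup : ∀ j, w j ≤ v j + ε := fun j => by linarith [neg_abs_le (v j - w j), hcoord j]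
  have hε : 0 ≤ 2 * ε := by linarith [(abs_nonneg _).trans (hcoord 0)]
  obtain ⟨hv₂, hv₃, hv₄, hv₅⟩ := hv
  rintro q ⟨hlo | hlo, hq₁, hq₂⟩
  · obtain ⟨p, ⟨hpl, hph⟩, hqp⟩ := exists_mem_Icc_mem_supBall2 hε
      (show v 0 - v 3 ≤ v 0 + v 5 by linarith) (show v 1 ≤ v 1 + v 2 by linarith)
      (by linarith [hlo.1, hlow 0, hup 3]) (by linarith [hlo.2, hlow 1])
      (by linarith [hup 0, hup 5]) (by linarith [hup 1, hup 2])
    exact mem_thick2.2 ⟨p, ⟨Or.inl hpl, hph⟩, hqp⟩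
  · obtain ⟨p, ⟨hpl, hph⟩, hqp⟩ := exists_mem_Icc_mem_supBall2 hε
      (show v 0 ≤ v 0 + v 5 by linarith) (show v 1 - v 4 ≤ v 1 + v 2 by linarith)
      (by linarith [hlo.1, hlow 0]) (by linarith [hlo.2, hlow 1, hup 4])
      (by linarith [hup 0, hup 5]) (by linarith [hup 1, hup 2])
    exact mem_thick2.2 ⟨p, ⟨Or.inr hpl, hph⟩, hqp⟩

/-- When `a` or `b` is infinite, both are, and both sides of the conclusion are junk `0`. -/
theorem abs_toReal_sub_toReal_le {a b : ℝ≥0∞} {c : ℝ} (hc : 0 ≤ c)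
    (hab : a ≤ b + ENNReal.ofReal c) (hba : b ≤ a + ENNReal.ofReal c) :
    |a.toReal - b.toReal| ≤ c := by
  by_cases ha : a = ⊤
  · have hb : b = ⊤ := by simpa [ha] using hab
    simp [ha, hb, hc]
  have hb : b ≠ ⊤ := ne_top_of_le_ne_top (by simp [ha]) hba
  have hab' := ENNReal.toReal_mono (by simp [hb]) hab
  have hba' := ENNReal.toReal_mono (by simp [ha]) hba
  rw [ENNReal.toReal_add hb ENNReal.ofReal_ne_top, ENNReal.toReal_ofReal hc] at hab'
  rw [ENNReal.toReal_add ha ENNReal.ofReal_ne_top, ENNReal.toReal_ofReal hc] at hba'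
  exact abs_sub_le_iff.2 ⟨by linarith, by linarith⟩

theorem loss_lipschitz_general (K : Finset (Set (ℝ × ℝ)))
    (n : ℕ) (w₁ w₂ : Fin (n + 1) → Fin 6 → ℝ)
    (h₁ : ∀ i, NonnegParams (w₁ i)) (h₂ : ∀ i, NonnegParams (w₂ i)) :
    |(dhat2 ↑K (Set.range fun i => int21v (w₁ i))).toReal -
        (dhat2 ↑K (Set.range fun i => int21v (w₂ i))).toReal| ≤
      2 * Finset.univ.inf' Finset.univ_nonempty
        (fun π : Equiv.Perm (Fin (n + 1)) =>
          Finset.univ.sup' Finset.univ_nonempty fun i => ‖w₁ (π i) - w₂ i‖) := by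
  obtain ⟨π, -, hπ⟩ := Finset.exists_mem_eq_inf' Finset.univ_nonempty
    fun π : Equiv.Perm (Fin (n + 1)) =>
      Finset.univ.sup' Finset.univ_nonempty fun i => ‖w₁ (π i) - w₂ i‖
  rw [hπ]
  set m := Finset.univ.sup' Finset.univ_nonempty fun i => ‖w₁ (π i) - w₂ i‖
  have hdist : ∀ i, ‖w₁ (π i) - w₂ i‖ ≤ m := fun i =>
    Finset.le_sup' (fun i => ‖w₁ (π i) - w₂ i‖) (Finset.mem_univ i)
  have hm : 0 ≤ 2 * m := by linarith [(norm_nonneg _).trans (hdist 0)]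
  have hcorr := isEpsCorr2_range_of_perm (f := fun i => int21v (w₁ i))
    (g := fun i => int21v (w₂ i)) π fun i =>
    ⟨int21v_subset_thick2 (h₁ (π i)) (hdist i),
      int21v_subset_thick2 (h₂ i) ((norm_sub_rev _ _).le.trans (hdist i))⟩
  exact abs_toReal_sub_toReal_le hm (dhat2_le_add_of_isEpsCorr2 hcorr.symm hm)
    (dhat2_le_add_of_isEpsCorr2 hcorr hm)

/-- Lipschitz stability of the sparsified loss: for a finite family `K` of
`(1,1)`- or `(2,1)`-intervals and two `n`-element parametrized families
`J₁, J₂`, `|d̂(K,J₁) − d̂(K,J₂)| ≤ 2 · min_π ‖v_{π(J₁)} − v_{J₂}‖_∞`, the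
minimum ranging over all bijections matching `J₁` with `J₂`. -/
theorem loss_lipschitz (K : Finset (Set (ℝ × ℝ))) (hKne : K.Nonempty)
    (hKint : ∀ I ∈ K, ∃ v : Fin 6 → ℝ, NonnegParams v ∧ I = int21v v)
    (n : ℕ) (w₁ w₂ : Fin (n + 1) → Fin 6 → ℝ)
    (h₁ : ∀ i, NonnegParams (w₁ i)) (h₂ : ∀ i, NonnegParams (w₂ i)) :
    |(dhat2 ↑K (Set.range fun i => int21v (w₁ i))).toReal -
        (dhat2 ↑K (Set.range fun i => int21v (w₂ i))).toReal| ≤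
      2 * Finset.univ.inf' Finset.univ_nonempty
        (fun π : Equiv.Perm (Fin (n + 1)) =>
          Finset.univ.sup' Finset.univ_nonempty fun i => ‖w₁ (π i) - w₂ i‖) :=
  loss_lipschitz_general K n w₁ w₂ h₁ h₂
end
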